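/- Let X be an order-N real tensor with dimensions s₁×⋯×s_N, let G be an order-N tensor with dimensions R₁×⋯×R_N where R_l ≤ s_l for every l, and for each l ∈ {1,…,N} let A^{(l)} ∈ ℝ^{s_l×R_l} have orthonormal columns. Let X̃ = G ×₁ A^{(1)} ×₂ ⋯ ×_N A^{(N)} and suppose ‖X − X̃‖₂ ≤ (1/3)‖X‖₂. Let Y^{(1)} = X ×₂ A^{(2)ᵀ} ⋯ ×_N A^{(N)ᵀ}, and for distinct i, j ∈ {2,…,N} let Y^{(i,j,1)} be X contracted in mode l with A^{(l)ᵀ} for every l ∈ {2,…,N}∖{i,j}. Then ‖Y^{(1)}‖₂ ≥ (1/3)‖X‖₂ and ‖Y^{(i,j,1)}‖₂ ≤ (5/3)‖X‖₂, where ‖·‖₂ denotes the tensor spectral norm. -/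

import Mathlib

open scoped BigOperators

/-- Euclidean (ℓ²) norm of a vector. -/
noncomputable def vnorm {n : ℕ} (v : Fin n → ℝ) : ℝ := Real.sqrt (∑ i, v i ^ 2)

/-- Frobenius norm: the ℓ² norm of all entries. -/
noncomputable def fnorm {ι : Type*} [Fintype ι] (T : ι → ℝ) : ℝ := Real.sqrt (∑ i, T i ^ 2)

/-- Matrix–vector product. -/
noncomputable def matvec {m n : ℕ} (M : Fin m → Fin n → ℝ) (x : Fin n → ℝ) : Fin m → ℝ :=
  fun i => ∑ j, M i j * x j

/-- Matrix–matrix product. -/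
noncomputable def matmul {m n p : ℕ} (A : Fin m → Fin n → ℝ) (B : Fin n → Fin p → ℝ) :
    Fin m → Fin p → ℝ :=
  fun i j => ∑ k, A i k * B k j

/-- Matrix spectral norm. -/
noncomputable def mnorm {m n : ℕ} (M : Fin m → Fin n → ℝ) : ℝ :=
  sSup {r | ∃ x : Fin n → ℝ, vnorm x = 1 ∧ r = vnorm (matvec M x)}

/-- `I(M)`: the infimum of `‖Mx‖₂` over unit vectors `x`. -/
noncomputable def minf {m n : ℕ} (M : Fin m → Fin n → ℝ) : ℝ :=
  sInf {r | ∃ x : Fin n → ℝ, vnorm x = 1 ∧ r = vnorm (matvec M x)}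

/-- Matrix Frobenius norm. -/
noncomputable def mfro {m n : ℕ} (M : Fin m → Fin n → ℝ) : ℝ :=
  Real.sqrt (∑ i, ∑ j, M i j ^ 2)

/-- The multilinear map `g_T` associated to an order-`(d+1)` tensor `T`;
mode `0` is the output mode, modes `1,…,d` are the input modes. -/
noncomputable def gmap {d : ℕ} {s : Fin (d+1) → ℕ} (T : (∀ i, Fin (s i)) → ℝ)
    (x : ∀ i, Fin (s i) → ℝ) : Fin (s 0) → ℝ :=
  fun i₁ => ∑ j : (∀ i, Fin (s i)),
    if j 0 = i₁ then T j * ∏ k ∈ Finset.univ.erase (0 : Fin (d+1)), x k (j k) else 0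

/-- The inputs `x i`, `i ≠ 0`, are all unit vectors. -/
def unitInputs {d : ℕ} {s : Fin (d+1) → ℕ} (x : ∀ i, Fin (s i) → ℝ) : Prop :=
  ∀ i : Fin (d+1), i ≠ 0 → vnorm (x i) = 1

/-- Tensor spectral norm: supremum of `‖g_T(x₂,…,x_N)‖₂` over unit inputs. -/
noncomputable def tnorm {d : ℕ} {s : Fin (d+1) → ℕ} (T : (∀ i, Fin (s i)) → ℝ) : ℝ :=
  sSup {r | ∃ x : (∀ i, Fin (s i) → ℝ), unitInputs x ∧ r = vnorm (gmap T x)}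

/-- `I(T)`: infimum of `‖g_T(x₂,…,x_N)‖₂` over unit inputs. -/
noncomputable def tinf {d : ℕ} {s : Fin (d+1) → ℕ} (T : (∀ i, Fin (s i)) → ℝ) : ℝ :=
  sInf {r | ∃ x : (∀ i, Fin (s i) → ℝ), unitInputs x ∧ r = vnorm (gmap T x)}

/-- Tensor condition number `κ(T) = ‖T‖₂ / I(T)`. -/
noncomputable def tcond {d : ℕ} {s : Fin (d+1) → ℕ} (T : (∀ i, Fin (s i)) → ℝ) : ℝ :=
  tnorm T / tinf T

/-- Dimensions after replacing the size of mode `n` by `J`. -/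
def repl {d : ℕ} (s : Fin (d+1) → ℕ) (n : Fin (d+1)) (J : ℕ) : Fin (d+1) → ℕ :=
  fun i => if i = n then J else s i

/-- Mode-`n` product `T ×ₙ A` with a matrix `A : Fin J → Fin (s n) → ℝ`:
`(T ×ₙ A)(i₁,…,a,…,i_N) = ∑ₖ T(i₁,…,k,…,i_N) A(a,k)`. -/
noncomputable def modeProd {d : ℕ} {s : Fin (d+1) → ℕ} (T : (∀ i, Fin (s i)) → ℝ)
    (n : Fin (d+1)) {J : ℕ} (A : Fin J → Fin (s n) → ℝ) :
    (∀ i, Fin (repl s n J i)) → ℝ :=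
  fun j => ∑ k : Fin (s n),
    T (fun i => if h : i = n then Fin.cast (congrArg s h.symm) k
        else Fin.cast (show repl s n J i = s i by simp [repl, h]) (j i)) *
      A (Fin.cast (show repl s n J n = J by simp [repl]) (j n)) k

/-- Multilinear transformation of a tensor: `multiProd X B = X ×₁ B₁ ×₂ ⋯ ×_N B_N`. -/
noncomputable def multiProd {d : ℕ} {s R : Fin (d+1) → ℕ}
    (X : (∀ i, Fin (s i)) → ℝ) (B : ∀ l, Fin (R l) → Fin (s l) → ℝ) :
    (∀ l, Fin (R l)) → ℝ :=
  fun j => ∑ k : (∀ l, Fin (s l)), X k * ∏ l, B l (j l) (k l)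

/-- Dimensions of `partialContract`: modes in `E` are kept at size `s l`,
the other modes are contracted down to size `R l`. -/
def keepDims {d : ℕ} (s R : Fin (d+1) → ℕ) (E : Finset (Fin (d+1))) : Fin (d+1) → ℕ :=
  fun l => if l ∈ E then s l else R l

/-- Contract every mode `l ∉ E` of `X` with `(A l)ᵀ`; keep the modes in `E` untouched. -/
noncomputable def partialContract {d : ℕ} {s R : Fin (d+1) → ℕ}
    (X : (∀ i, Fin (s i)) → ℝ) (A : ∀ l, Fin (s l) → Fin (R l) → ℝ)
    (E : Finset (Fin (d+1))) : (∀ l, Fin (keepDims s R E l)) → ℝ :=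
  multiProd X (fun l a b =>
    if h : l ∈ E then
      (if b = Fin.cast (show keepDims s R E l = s l by simp [keepDims, h]) a then (1:ℝ) else 0)
    else A l b (Fin.cast (show keepDims s R E l = R l by simp [keepDims, h]) a))


/-!
The mode products act on the multilinear map through
`g_{X ×₀ B₀ ⋯ ×_d B_d}(x₁, …, x_d) = B₀ g_X(B₁ᵀx₁, …, B_dᵀx_d)`.
Hence a multilinear product does not increase the spectral norm when `B₀` and all `B_lᵀ` are
contractions, and it preserves the spectral norm when every `B_l` has orthonormal columns, because
multiplying by the `B_lᵀ` undoes it. Contracting modes with the `A_lᵀ` is therefore non-expansive,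
which gives the upper bound. It also preserves the norm of the Tucker tensor
`X̃ = G ×₀ A₀ ⋯ ×_d A_d`, since both norms equal `‖G‖₂`. The lower bound then follows from the
triangle inequality; writing `Y¹(T)` for `T` contracted in the modes `1, …, d`,
`‖X‖ ≤ ‖X̃‖ + ‖X - X̃‖ = ‖Y¹(X̃)‖ + ‖X - X̃‖ ≤ ‖Y¹(X)‖ + 2‖X - X̃‖ ≤ ‖Y¹(X)‖ + (2/3)‖X‖`.
-/
open Finset Matrix

section Vector

variable {n : ℕ}

lemma vnorm_eq_norm (v : Fin n → ℝ) : vnorm v = ‖WithLp.toLp 2 v‖ := by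
  simp [vnorm, EuclideanSpace.norm_eq]

lemma vnorm_nonneg (v : Fin n → ℝ) : 0 ≤ vnorm v := Real.sqrt_nonneg _

lemma vnorm_add_le (u v : Fin n → ℝ) : vnorm (u + v) ≤ vnorm u + vnorm v := by
  simpa only [vnorm_eq_norm, WithLp.toLp_add] using norm_add_le _ _

lemma vnorm_smul (c : ℝ) (v : Fin n → ℝ) : vnorm (c • v) = |c| * vnorm v := by
  simp only [vnorm_eq_norm, WithLp.toLp_smul, norm_smul, Real.norm_eq_abs]

lemma vnorm_eq_zero {v : Fin n → ℝ} : vnorm v = 0 ↔ v = 0 := by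
  simp [vnorm_eq_norm]

lemma abs_le_vnorm (v : Fin n → ℝ) (i : Fin n) : |v i| ≤ vnorm v := by
  simpa [vnorm_eq_norm] using PiLp.norm_apply_le (WithLp.toLp 2 v) i

lemma sq_vnorm (v : Fin n → ℝ) : vnorm v ^ 2 = v ⬝ᵥ v := by
  rw [vnorm, Real.sq_sqrt (by positivity)]
  simp [dotProduct, sq]

lemma dotProduct_le_vnorm_mul (v w : Fin n → ℝ) : v ⬝ᵥ w ≤ vnorm v * vnorm w := by
  simpa [vnorm_eq_norm, EuclideanSpace.inner_eq_star_dotProduct, dotProduct_comm]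
    using real_inner_le_norm (WithLp.toLp 2 v) (WithLp.toLp 2 w)

lemma vnorm_le_of_abs_le {v : Fin n → ℝ} {C : ℝ} (hC : 0 ≤ C) (h : ∀ i, |v i| ≤ C) :
    vnorm v ≤ Real.sqrt n * C := by
  rw [← Real.sqrt_sq hC, ← Real.sqrt_mul (Nat.cast_nonneg n)]
  refine Real.sqrt_le_sqrt ?_
  simpa using sum_le_sum fun i (_ : i ∈ univ) => sq_le_sq' (abs_le.mp (h i)).1 (abs_le.mp (h i)).2

end Vector

section Isometry

variable {m n : ℕ} {M : Matrix (Fin m) (Fin n) ℝ}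

lemma vnorm_mulVec_of_transpose_mul_self (hM : Mᵀ * M = 1) (v : Fin n → ℝ) :
    vnorm (M *ᵥ v) = vnorm v := by
  have h : (M *ᵥ v) ⬝ᵥ (M *ᵥ v) = v ⬝ᵥ v := by
    rw [dotProduct_mulVec, ← mulVec_transpose, mulVec_mulVec, hM, one_mulVec, dotProduct_comm]
  rw [← pow_left_inj₀ (vnorm_nonneg _) (vnorm_nonneg _) two_ne_zero, sq_vnorm, sq_vnorm, h]

lemma vnorm_transpose_mulVec_le (hM : Mᵀ * M = 1) (v : Fin m → ℝ) :
    vnorm (Mᵀ *ᵥ v) ≤ vnorm v := by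
  have h : vnorm (Mᵀ *ᵥ v) ^ 2 ≤ vnorm v * vnorm (Mᵀ *ᵥ v) := calc
    vnorm (Mᵀ *ᵥ v) ^ 2 = v ⬝ᵥ M *ᵥ (Mᵀ *ᵥ v) := by
      rw [sq_vnorm, dotProduct_mulVec, ← mulVec_transpose, transpose_transpose, dotProduct_comm]
    _ ≤ vnorm v * vnorm (M *ᵥ (Mᵀ *ᵥ v)) := dotProduct_le_vnorm_mul _ _
    _ = vnorm v * vnorm (Mᵀ *ᵥ v) := by rw [vnorm_mulVec_of_transpose_mul_self hM]
  nlinarith [vnorm_nonneg v, vnorm_nonneg (Mᵀ *ᵥ v)]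

lemma transpose_mul_self_eq_one_of_sum {M : Matrix (Fin m) (Fin n) ℝ}
    (h : ∀ k k', ∑ i, M i k * M i k' = if k = k' then (1:ℝ) else 0) : Mᵀ * M = 1 :=
  Matrix.ext fun k k' => by simpa [Matrix.mul_apply, Matrix.one_apply] using h k k'

end Isometry

section SpectralNorm

variable {d : ℕ} {s : Fin (d+1) → ℕ}

lemma abs_gmap_le (T : (∀ i, Fin (s i)) → ℝ) {x : ∀ i, Fin (s i) → ℝ} (hx : unitInputs x)
    (i : Fin (s 0)) : |gmap T x i| ≤ ∑ j, |T j| := by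
  refine (abs_sum_le_sum_abs _ _).trans (sum_le_sum fun j _ => ?_)
  split_ifs
  · rw [abs_mul, abs_prod]
    refine mul_le_of_le_one_right (abs_nonneg _) (prod_le_one (fun _ _ => abs_nonneg _) ?_)
    intro k hk
    exact (abs_le_vnorm _ _).trans (hx k (ne_of_mem_erase hk)).le
  · simp

lemma bddAbove_tnorm (T : (∀ i, Fin (s i)) → ℝ) :
    BddAbove {r | ∃ x : ∀ i, Fin (s i) → ℝ, unitInputs x ∧ r = vnorm (gmap T x)} := by
  refine ⟨Real.sqrt (s 0) * ∑ j, |T j|, ?_⟩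
  rintro r ⟨x, hx, rfl⟩
  exact vnorm_le_of_abs_le (sum_nonneg fun j _ => abs_nonneg _) (abs_gmap_le T hx)

lemma tnorm_nonneg (T : (∀ i, Fin (s i)) → ℝ) : 0 ≤ tnorm T :=
  Real.sSup_nonneg fun _ ⟨_, _, hr⟩ => hr ▸ vnorm_nonneg _

lemma vnorm_gmap_le_tnorm (T : (∀ i, Fin (s i)) → ℝ) {x : ∀ i, Fin (s i) → ℝ}
    (hx : unitInputs x) : vnorm (gmap T x) ≤ tnorm T :=
  le_csSup (bddAbove_tnorm T) ⟨x, hx, rfl⟩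

lemma tnorm_le {T : (∀ i, Fin (s i)) → ℝ} {c : ℝ} (hc : 0 ≤ c)
    (h : ∀ x, unitInputs x → vnorm (gmap T x) ≤ c) : tnorm T ≤ c :=
  Real.sSup_le (fun _ ⟨x, hx, hr⟩ => hr ▸ h x hx) hc

lemma gmap_add (U V : (∀ i, Fin (s i)) → ℝ) (x : ∀ i, Fin (s i) → ℝ) :
    gmap (U + V) x = gmap U x + gmap V x := by
  ext i
  simp only [gmap, Pi.add_apply, ← sum_add_distrib]
  refine sum_congr rfl fun j _ => ?_
  split_ifs <;> ring

lemma gmap_neg (U : (∀ i, Fin (s i)) → ℝ) (x : ∀ i, Fin (s i) → ℝ) :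
    gmap (-U) x = -gmap U x := by
  ext i
  simp only [gmap, Pi.neg_apply, ← sum_neg_distrib]
  refine sum_congr rfl fun j _ => ?_
  split_ifs <;> ring

lemma tnorm_add_le (U V : (∀ i, Fin (s i)) → ℝ) : tnorm (U + V) ≤ tnorm U + tnorm V :=
  tnorm_le (add_nonneg (tnorm_nonneg U) (tnorm_nonneg V)) fun x hx => by
    rw [gmap_add]
    exact (vnorm_add_le _ _).trans
      (add_le_add (vnorm_gmap_le_tnorm U hx) (vnorm_gmap_le_tnorm V hx))

lemma tnorm_neg (U : (∀ i, Fin (s i)) → ℝ) : tnorm (-U) = tnorm U := by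
  simp only [tnorm, gmap_neg, vnorm_eq_norm, WithLp.toLp_neg, norm_neg]

lemma tnorm_sub_le (U V : (∀ i, Fin (s i)) → ℝ) : tnorm (U - V) ≤ tnorm U + tnorm V := by
  simpa [sub_eq_add_neg, tnorm_neg] using tnorm_add_le U (-V)

lemma gmap_smul (T : (∀ i, Fin (s i)) → ℝ) (c : Fin (d+1) → ℝ) (x : ∀ i, Fin (s i) → ℝ) :
    gmap T (fun l => c l • x l) = (∏ l ∈ univ.erase 0, c l) • gmap T x := by
  ext i
  simp only [gmap, Pi.smul_apply, smul_eq_mul, mul_sum]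
  refine sum_congr rfl fun j _ => ?_
  split_ifs
  · rw [prod_mul_distrib]; ring
  · simp

lemma gmap_eq_zero {T : (∀ i, Fin (s i)) → ℝ} {x : ∀ i, Fin (s i) → ℝ} {l : Fin (d+1)}
    (hl : l ≠ 0) (hx : x l = 0) : gmap T x = 0 := by
  ext i
  refine sum_eq_zero fun j _ => ?_
  rw [prod_eq_zero (mem_erase.mpr ⟨hl, mem_univ l⟩) (by simp [hx])]
  simp

lemma vnorm_gmap_le (T : (∀ i, Fin (s i)) → ℝ) (x : ∀ i, Fin (s i) → ℝ) :
    vnorm (gmap T x) ≤ tnorm T * ∏ l ∈ univ.erase 0, vnorm (x l) := by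
  by_cases hzero : ∃ l ≠ 0, x l = 0
  · obtain ⟨l, hl, hxl⟩ := hzero
    rw [gmap_eq_zero hl hxl, vnorm_eq_zero.mpr rfl]
    exact mul_nonneg (tnorm_nonneg T) (prod_nonneg fun l _ => vnorm_nonneg _)
  push Not at hzero
  -- `x l = ‖x l‖ • ‖x l‖⁻¹ • x l` holds also when `x l = 0`
  set w : ∀ l, Fin (s l) → ℝ := fun l => (vnorm (x l))⁻¹ • x l
  have hw : unitInputs w := fun l hl => by
    rw [vnorm_smul, abs_inv, abs_of_nonneg (vnorm_nonneg _),
      inv_mul_cancel₀ (vnorm_eq_zero.not.mpr (hzero l hl))]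
  have hxw : x = fun l => vnorm (x l) • w l := by
    funext l
    by_cases h : x l = 0
    · simp [w, h]
    · rw [smul_smul, mul_inv_cancel₀ (vnorm_eq_zero.not.mpr h), one_smul]
  have hprod : 0 ≤ ∏ l ∈ univ.erase 0, vnorm (x l) := prod_nonneg fun l _ => vnorm_nonneg _
  conv_lhs => rw [hxw, gmap_smul, vnorm_smul, abs_of_nonneg hprod]
  rw [mul_comm]
  exact mul_le_mul_of_nonneg_right (vnorm_gmap_le_tnorm T hw) hprod

end SpectralNorm

section MultiProd

variable {d : ℕ} {s t u : Fin (d+1) → ℕ}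

lemma multiProd_sub (X Y : (∀ l, Fin (t l)) → ℝ) (B : ∀ l, Matrix (Fin (u l)) (Fin (t l)) ℝ) :
    multiProd (X - Y) B = multiProd X B - multiProd Y B := by
  ext j
  simp only [multiProd, Pi.sub_apply, sub_mul, sum_sub_distrib]

lemma multiProd_multiProd (X : (∀ l, Fin (s l)) → ℝ) (B : ∀ l, Matrix (Fin (t l)) (Fin (s l)) ℝ)
    (C : ∀ l, Matrix (Fin (u l)) (Fin (t l)) ℝ) :
    multiProd (multiProd X B) C = multiProd X (fun l => C l * B l) := by
  ext j
  simp only [multiProd, Matrix.mul_apply, sum_mul, Fintype.prod_sum]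
  rw [sum_comm]
  refine sum_congr rfl fun k _ => ?_
  rw [mul_sum]
  refine sum_congr rfl fun a _ => ?_
  rw [prod_mul_distrib]
  ring

lemma multiProd_one (X : (∀ l, Fin (s l)) → ℝ) :
    multiProd X (fun l => (1 : Matrix (Fin (s l)) (Fin (s l)) ℝ)) = X := by
  ext j
  unfold multiProd
  rw [sum_eq_single j]
  · simp
  · intro k _ hk
    obtain ⟨l, hl⟩ := Function.ne_iff.mp hk
    rw [prod_eq_zero (mem_univ l) (by simp [Matrix.one_apply_ne' hl]), mul_zero]
  · simp

lemma sum_multiProd_mul_prod (X : (∀ l, Fin (t l)) → ℝ) (B : ∀ l, Matrix (Fin (u l)) (Fin (t l)) ℝ)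
    (y : ∀ l, Fin (u l) → ℝ) :
    ∑ j, multiProd X B j * ∏ l, y l (j l) = ∑ k, X k * ∏ l, ((B l)ᵀ *ᵥ y l) (k l) := by
  simp only [multiProd, sum_mul, mulVec, dotProduct, transpose_apply, Fintype.prod_sum]
  rw [sum_comm]
  refine sum_congr rfl fun k _ => ?_
  rw [mul_sum]
  refine sum_congr rfl fun j _ => ?_
  rw [prod_mul_distrib]
  ring

lemma prod_update_zero (y : ∀ l, Fin (t l) → ℝ) (v : Fin (t 0) → ℝ) (k : ∀ l, Fin (t l)) :
    ∏ l, Function.update y 0 v l (k l) = v (k 0) * ∏ l ∈ univ.erase 0, y l (k l) := by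
  rw [← mul_prod_erase univ _ (mem_univ 0), Function.update_self]
  congr 1
  exact prod_congr rfl fun l hl => by rw [Function.update_of_ne (ne_of_mem_erase hl)]

lemma gmap_eq_sum_prod_update (T : (∀ l, Fin (t l)) → ℝ) (x : ∀ l, Fin (t l) → ℝ)
    (i : Fin (t 0)) :
    gmap T x i = ∑ k, T k * ∏ l, Function.update x 0 (Pi.single i 1) l (k l) := by
  refine sum_congr rfl fun k _ => ?_
  rw [prod_update_zero, Pi.single_apply]
  split_ifs <;> simp

lemma gmap_multiProd (X : (∀ l, Fin (t l)) → ℝ) (B : ∀ l, Matrix (Fin (u l)) (Fin (t l)) ℝ)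
    (x : ∀ l, Fin (u l) → ℝ) :
    gmap (multiProd X B) x = B 0 *ᵥ gmap X (fun l => (B l)ᵀ *ᵥ x l) := by
  ext i
  rw [gmap_eq_sum_prod_update, sum_multiProd_mul_prod]
  simp only [Function.apply_update (fun l v => (B l)ᵀ *ᵥ v), mulVec_single_one, col_apply,
    prod_update_zero]
  simp only [transpose_apply, mulVec, dotProduct, gmap, mul_sum, mul_ite, mul_zero]
  rw [sum_comm]
  refine sum_congr rfl fun k _ => ?_
  simp only [sum_ite_eq, mem_univ, if_true]
  ring

end MultiProd

section MultiProdNorm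

variable {d : ℕ} {s t u : Fin (d+1) → ℕ}

lemma tnorm_multiProd_le (X : (∀ l, Fin (t l)) → ℝ) {B : ∀ l, Matrix (Fin (u l)) (Fin (t l)) ℝ}
    (h0 : ∀ v, vnorm (B 0 *ᵥ v) ≤ vnorm v) (hB : ∀ l ≠ 0, ∀ v, vnorm ((B l)ᵀ *ᵥ v) ≤ vnorm v) :
    tnorm (multiProd X B) ≤ tnorm X := by
  refine tnorm_le (tnorm_nonneg X) fun x hx => ?_
  have hprod : ∏ l ∈ univ.erase 0, vnorm ((B l)ᵀ *ᵥ x l) ≤ 1 :=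
    prod_le_one (fun _ _ => vnorm_nonneg _) fun l hl =>
      (hB l (ne_of_mem_erase hl) _).trans (hx l (ne_of_mem_erase hl)).le
  rw [gmap_multiProd]
  calc _ ≤ vnorm (gmap X fun l => (B l)ᵀ *ᵥ x l) := h0 _
    _ ≤ tnorm X * ∏ l ∈ univ.erase 0, vnorm ((B l)ᵀ *ᵥ x l) := vnorm_gmap_le _ _
    _ ≤ tnorm X := mul_le_of_le_one_right (tnorm_nonneg X) hprod

lemma tnorm_multiProd_of_transpose_mul_self (X : (∀ l, Fin (s l)) → ℝ)
    {Q : ∀ l, Matrix (Fin (t l)) (Fin (s l)) ℝ} (hQ : ∀ l, (Q l)ᵀ * Q l = 1) :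
    tnorm (multiProd X Q) = tnorm X := by
  refine le_antisymm ?_ ?_
  · exact tnorm_multiProd_le X (fun v => (vnorm_mulVec_of_transpose_mul_self (hQ 0) v).le)
      fun l _ v => vnorm_transpose_mulVec_le (hQ l) v
  · have hX : multiProd (multiProd X Q) (fun l => (Q l)ᵀ) = X := by
      rw [multiProd_multiProd]
      simp only [hQ]
      exact multiProd_one X
    conv_lhs => rw [← hX]
    exact tnorm_multiProd_le _ (vnorm_transpose_mulVec_le (hQ 0))
      fun l _ v => by rw [transpose_transpose, vnorm_mulVec_of_transpose_mul_self (hQ l)]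

end MultiProdNorm

section Reindex

variable {m m' n : Type*}

lemma transpose_mul_self_submatrix [Fintype m] [Fintype m'] (M : Matrix m n ℝ) (e : m' ≃ m) :
    (M.submatrix e id)ᵀ * M.submatrix e id = Mᵀ * M := by
  rw [transpose_submatrix, submatrix_mul_equiv, submatrix_id_id]

lemma submatrix_mul_transpose_self [Fintype n] (M : Matrix m n ℝ) (e : m' ≃ m) :
    M.submatrix e id * (M.submatrix e id)ᵀ = (M * Mᵀ).submatrix e e := by
  rw [transpose_submatrix, ← Equiv.coe_refl, submatrix_mul_equiv]

end Reindex

section PartialContract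

variable {d : ℕ} {s R : Fin (d+1) → ℕ}

lemma partialContract_sub (X Y : (∀ l, Fin (s l)) → ℝ) (A : ∀ l, Fin (s l) → Fin (R l) → ℝ)
    (E : Finset (Fin (d+1))) :
    partialContract (X - Y) A E = partialContract X A E - partialContract Y A E :=
  multiProd_sub X Y _

lemma keepDims_of_mem {E : Finset (Fin (d+1))} {l : Fin (d+1)} (h : l ∈ E) :
    keepDims s R E l = s l := if_pos h

lemma keepDims_of_notMem {E : Finset (Fin (d+1))} {l : Fin (d+1)} (h : l ∉ E) :
    keepDims s R E l = R l := if_neg h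

noncomputable def contractMat (A : ∀ l, Matrix (Fin (s l)) (Fin (R l)) ℝ) (E : Finset (Fin (d+1)))
    (l : Fin (d+1)) : Matrix (Fin (keepDims s R E l)) (Fin (s l)) ℝ :=
  if h : l ∈ E then
    (1 : Matrix (Fin (s l)) (Fin (s l)) ℝ).submatrix (finCongr (keepDims_of_mem h)) id
  else (A l)ᵀ.submatrix (finCongr (keepDims_of_notMem h)) id

lemma partialContract_eq_multiProd (X : (∀ l, Fin (s l)) → ℝ)
    (A : ∀ l, Matrix (Fin (s l)) (Fin (R l)) ℝ) (E : Finset (Fin (d+1))) :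
    partialContract X A E = multiProd X (contractMat A E) := by
  unfold partialContract contractMat
  congr
  ext l a b
  by_cases h : l ∈ E
  · simp [h, Matrix.one_apply, eq_comm]
  · simp [h]

variable {A : ∀ l, Matrix (Fin (s l)) (Fin (R l)) ℝ} {E : Finset (Fin (d+1))}

lemma transpose_mul_self_contractMat_of_mem {l : Fin (d+1)} (h : l ∈ E) :
    (contractMat A E l)ᵀ * contractMat A E l = 1 := by
  rw [contractMat, dif_pos h, transpose_mul_self_submatrix, transpose_one, Matrix.one_mul]

lemma contractMat_mul_transpose (hA : ∀ l, (A l)ᵀ * A l = 1) (l : Fin (d+1)) :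
    contractMat A E l * (contractMat A E l)ᵀ = 1 := by
  unfold contractMat
  split_ifs
  · rw [submatrix_mul_transpose_self, transpose_one, Matrix.mul_one, submatrix_one_equiv]
  · rw [submatrix_mul_transpose_self, transpose_transpose, hA, submatrix_one_equiv]

lemma transpose_mul_self_contractMat_mul (hA : ∀ l, (A l)ᵀ * A l = 1) (l : Fin (d+1)) :
    (contractMat A E l * A l)ᵀ * (contractMat A E l * A l) = 1 := by
  rw [transpose_mul, Matrix.mul_assoc, ← Matrix.mul_assoc (contractMat A E l)ᵀ]
  unfold contractMat
  split_ifs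
  · rw [transpose_mul_self_submatrix, transpose_one, Matrix.one_mul, Matrix.one_mul, hA]
  · rw [transpose_mul_self_submatrix, transpose_transpose, Matrix.mul_assoc, hA, Matrix.mul_one,
      hA]

lemma tnorm_partialContract_le (X : (∀ l, Fin (s l)) → ℝ) (hA : ∀ l, (A l)ᵀ * A l = 1)
    (h0 : 0 ∈ E) : tnorm (partialContract X A E) ≤ tnorm X := by
  rw [partialContract_eq_multiProd]
  refine tnorm_multiProd_le X
    (fun v => (vnorm_mulVec_of_transpose_mul_self (transpose_mul_self_contractMat_of_mem h0) v).le)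
    fun l _ v => (vnorm_mulVec_of_transpose_mul_self ?_ v).le
  rw [transpose_transpose, contractMat_mul_transpose hA]

lemma tnorm_partialContract_multiProd (G : (∀ l, Fin (R l)) → ℝ) (hA : ∀ l, (A l)ᵀ * A l = 1) :
    tnorm (partialContract (multiProd G A) A E) = tnorm (multiProd G A) := by
  rw [partialContract_eq_multiProd, multiProd_multiProd,
    tnorm_multiProd_of_transpose_mul_self G (transpose_mul_self_contractMat_mul hA),
    tnorm_multiProd_of_transpose_mul_self G hA]

end PartialContract

theorem tucker_Y_norm_bounds_general {d : ℕ} {s R : Fin (d+1) → ℕ}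
    (X : (∀ l, Fin (s l)) → ℝ) (G : (∀ l, Fin (R l)) → ℝ)
    (A : ∀ l, Fin (s l) → Fin (R l) → ℝ)
    (hA : ∀ l, ∀ k k' : Fin (R l), ∑ i, A l i k * A l i k' = if k = k' then (1:ℝ) else 0)
    (i j : Fin (d+1))
    (hres : tnorm (fun k => X k - multiProd G A k) ≤ (1/3) * tnorm X) :
    (1/3) * tnorm X ≤ tnorm (partialContract X A {0}) ∧
    tnorm (partialContract X A ({0, i, j} : Finset (Fin (d+1)))) ≤ (5/3) * tnorm X := by
  have hA' := fun l => transpose_mul_self_eq_one_of_sum (hA l)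
  set Xt := multiProd G A
  have hres' : tnorm (X - Xt) ≤ (1/3) * tnorm X := hres
  refine ⟨?_, ?_⟩
  · have hX : tnorm X ≤ tnorm Xt + tnorm (X - Xt) := by
      simpa using tnorm_add_le Xt (X - Xt)
    have hXt : tnorm Xt ≤ tnorm (partialContract X A {0}) + tnorm (X - Xt) := calc
      tnorm Xt = tnorm (partialContract Xt A {0}) := (tnorm_partialContract_multiProd G hA').symm
      _ = tnorm (partialContract X A {0} - partialContract (X - Xt) A {0}) := by
        rw [partialContract_sub, sub_sub_cancel]
      _ ≤ tnorm (partialContract X A {0}) + tnorm (partialContract (X - Xt) A {0}) :=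
        tnorm_sub_le _ _
      _ ≤ tnorm (partialContract X A {0}) + tnorm (X - Xt) :=
        add_le_add le_rfl (tnorm_partialContract_le _ hA' (mem_singleton_self 0))
    linarith
  · linarith [tnorm_partialContract_le X hA' (mem_insert_self 0 {i, j}), tnorm_nonneg X]

/-- key norm bounds in the proof of Theorem 4.5 of the paper.
`X` is an order-`N` tensor (`N = d+1`, mode `0` playing the role of mode 1),
`G` a core tensor with `R l ≤ s l`, each `A l` has orthonormal columns, and the Tucker
residual satisfies `‖X − G ×₁ A¹ ⋯ ×_N A^N‖₂ ≤ (1/3)‖X‖₂`.  With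
`Y¹ = X ×₂ A²ᵀ ⋯ ×_N A^Nᵀ` (all modes but `0` contracted) and `Y^{i,j,1}` obtained by
contracting all modes except `0, i, j`:  `‖Y¹‖₂ ≥ (1/3)‖X‖₂` and `‖Y^{i,j,1}‖₂ ≤ (5/3)‖X‖₂`. -/
theorem tucker_Y_norm_bounds {d : ℕ} {s R : Fin (d+1) → ℕ}
    (X : (∀ l, Fin (s l)) → ℝ) (G : (∀ l, Fin (R l)) → ℝ)
    (A : ∀ l, Fin (s l) → Fin (R l) → ℝ)
    (hR : ∀ l, R l ≤ s l)
    (hA : ∀ l, ∀ k k' : Fin (R l), ∑ i, A l i k * A l i k' = if k = k' then (1:ℝ) else 0)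
    (i j : Fin (d+1)) (hi : i ≠ 0) (hj : j ≠ 0) (hij : i ≠ j)
    (hres : tnorm (fun k => X k - multiProd G A k) ≤ (1/3) * tnorm X) :
    (1/3) * tnorm X ≤ tnorm (partialContract X A {0}) ∧
    tnorm (partialContract X A ({0, i, j} : Finset (Fin (d+1)))) ≤ (5/3) * tnorm X :=
  tucker_Y_norm_bounds_general X G A hA i j hres
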